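/- arXiv:2505.20372 — 2 statements merged into one kernel-verified Lean document; each statement's English description precedes it below -/
import Mathlib

section
/- Let ρ : [0,1] × [0,∞) → (0,∞) be continuous, C¹, and satisfy ρ_θ(κ,θ) + g(κ,θ)·min{ν_min(κ) ρ_κ(κ,θ), ν_max(κ) ρ_κ(κ,θ)} = f(κ,θ) ρ(κ,θ) with g > 0, where ν_min(κ) ≤ 0 ≤ ν_max(κ). Then for every admissible ν (measurable with ν_min(κ) ≤ ν(κ,θ) ≤ ν_max(κ)) and every solution (r, κ) of r′ = f(κ,θ) r, κ′ = g(κ,θ) ν(κ,θ) with κ(θ) ∈ [0,1] and r(0) > 0, one has r(θ) ≤ ρ(κ(θ), θ) · r(0) / ρ(κ(0), 0) for all θ ≥ 0. -/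
/-!
Along a solution, `t ↦ ρ(κ t, t)` grows at rate `ρ_κ g ν + ρ_θ`, which the HJB equation and
`g > 0` bound below by `f ρ`, because `ν ρ_κ` is linear in `ν` and so is minimised at
`ν_min` or `ν_max`. Hence the quotient `r / ρ(κ, θ)` has nonpositive derivative wherever
`r > 0`. A fencing argument shows that such a quotient, positive at `0`, never exceeds its
initial value, even though `r` is not known to stay positive.
-/

open Set Filter Topology

theorem min_mul_le_mul_of_le_of_le {α : Type*} [Ring α] [LinearOrder α] [IsStrictOrderedRing α]
    {a b x c : α} (hax : a ≤ x) (hxb : x ≤ b) :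
    min (a * c) (b * c) ≤ x * c := by
  rcases le_total 0 c with hc | hc
  · exact (min_le_left _ _).trans (mul_le_mul_of_nonneg_right hax hc)
  · exact (min_le_right _ _).trans (mul_le_mul_of_nonpos_right hxb hc)

theorem hasDerivAt_comp_graph {F : ℝ → ℝ → ℝ} {Fx Fy : ℝ} {x : ℝ → ℝ} {x' t : ℝ}
    (hF : HasFDerivAt (fun p : ℝ × ℝ => F p.1 p.2)
      (Fx • ContinuousLinearMap.fst ℝ ℝ ℝ + Fy • ContinuousLinearMap.snd ℝ ℝ ℝ) (x t, t))
    (hx : HasDerivAt x x' t) :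
    HasDerivAt (fun s => F (x s) s) (Fx * x' + Fy) t := by
  have h := hF.comp_hasDerivAt_of_eq t (hx.prodMk (hasDerivAt_id t)) rfl
  simpa [Function.comp_def] using h

/-- `f' ≤ 0` is only known where `f > 0`, so the fencing theorem needs strict barriers:
`f a + ε (x - a)`, with `ε → 0`. -/
theorem le_of_hasDerivAt_nonpos_of_pos {f f' : ℝ → ℝ} {a b : ℝ}
    (hf : ∀ x ∈ Icc a b, HasDerivAt f (f' x) x) (hf' : ∀ x ∈ Ico a b, 0 < f x → f' x ≤ 0)
    (ha : 0 < f a) : ∀ x ∈ Icc a b, f x ≤ f a := by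
  intro x hx
  have hbarrier : ∀ ε > 0, f x ≤ f a + ε * (x - a) := fun ε hε => by
    have hB : ∀ y, HasDerivAt (fun y => f a + ε * (y - a)) ε y := fun y => by
      simpa using (((hasDerivAt_id y).sub_const a).const_mul ε).const_add (f a)
    refine image_le_of_deriv_right_lt_deriv_boundary
      (fun y hy => (hf y hy).continuousAt.continuousWithinAt)
      (fun y hy => (hf y (Ico_subset_Icc_self hy)).hasDerivWithinAt) (by simp) hB
      (fun y hy hfy => (hf' y hy ?_).trans_lt hε) hx
    rw [hfy]
    nlinarith [hy.1]
  have hlim : Tendsto (fun ε => f a + ε * (x - a)) (𝓝[>] 0) (𝓝 (f a)) := by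
    refine (Continuous.tendsto' ?_ 0 _ (by simp)).mono_left nhdsWithin_le_nhds
    fun_prop
  exact ge_of_tendsto hlim (eventually_nhdsWithin_of_forall hbarrier)

theorem div_le_div_of_hasDerivAt {r r' P P' : ℝ → ℝ} {a b : ℝ}
    (hr : ∀ x ∈ Icc a b, HasDerivAt r (r' x) x) (hP : ∀ x ∈ Icc a b, HasDerivAt P (P' x) x)
    (hPpos : ∀ x ∈ Icc a b, 0 < P x) (hcmp : ∀ x ∈ Ico a b, 0 < r x → r' x * P x ≤ r x * P' x)
    (ha : 0 < r a) : ∀ x ∈ Icc a b, r x / P x ≤ r a / P a := by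
  intro x hx
  have hPa : 0 < P a := hPpos a (left_mem_Icc.2 (hx.1.trans hx.2))
  refine le_of_hasDerivAt_nonpos_of_pos
    (fun y hy => (hr y hy).div (hP y hy) (hPpos y hy).ne') (fun y hy hpos => ?_) (div_pos ha hPa) x hx
  have hPy := hPpos y (Ico_subset_Icc_self hy)
  exact div_nonpos_of_nonpos_of_nonneg
    (sub_nonpos.2 (hcmp y hy ((div_pos_iff_of_pos_right hPy).1 hpos))) (sq_nonneg _)

theorem stmt_6_general (f g : ℝ → ℝ → ℝ) (νmin νmax : ℝ → ℝ)
    (hgpos : ∀ κ ∈ Icc (0:ℝ) 1, ∀ θ : ℝ, 0 ≤ θ → 0 < g κ θ)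
    (ρ ρκ ρθ : ℝ → ℝ → ℝ)
    (hρC1 : ∀ κ θ : ℝ, HasFDerivAt (fun p : ℝ × ℝ => ρ p.1 p.2)
      (ρκ κ θ • ContinuousLinearMap.fst ℝ ℝ ℝ + ρθ κ θ • ContinuousLinearMap.snd ℝ ℝ ℝ)
      (κ, θ))
    (hρpos : ∀ κ ∈ Icc (0:ℝ) 1, ∀ θ : ℝ, 0 ≤ θ → 0 < ρ κ θ)
    -- the HJB equation
    (hHJB : ∀ κ ∈ Icc (0:ℝ) 1, ∀ θ : ℝ, 0 ≤ θ →
      ρθ κ θ + g κ θ * min (νmin κ * ρκ κ θ) (νmax κ * ρκ κ θ) = f κ θ * ρ κ θ)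
    -- an admissible solution
    (r κ ν : ℝ → ℝ)
    (hνadm : ∀ θ : ℝ, 0 ≤ θ → νmin (κ θ) ≤ ν θ ∧ ν θ ≤ νmax (κ θ))
    (hκrange : ∀ θ : ℝ, 0 ≤ θ → κ θ ∈ Icc (0:ℝ) 1)
    (hr : ∀ θ : ℝ, 0 ≤ θ → HasDerivAt r (f (κ θ) θ * r θ) θ)
    (hκ' : ∀ θ : ℝ, 0 ≤ θ → HasDerivAt κ (g (κ θ) θ * ν θ) θ)
    (hr0 : 0 < r 0) :
    ∀ θ : ℝ, 0 ≤ θ → r θ ≤ ρ (κ θ) θ * r 0 / ρ (κ 0) 0 := by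
  intro θ hθ
  have hρ : ∀ t, 0 ≤ t → 0 < ρ (κ t) t := fun t ht => hρpos _ (hκrange t ht) t ht
  have hsuper : ∀ t, 0 ≤ t →
      f (κ t) t * ρ (κ t) t ≤ ρκ (κ t) t * (g (κ t) t * ν t) + ρθ (κ t) t := by
    intro t ht
    have hmin := min_mul_le_mul_of_le_of_le (c := ρκ (κ t) t) (hνadm t ht).1 (hνadm t ht).2
    have hg := mul_le_mul_of_nonneg_left hmin (hgpos _ (hκrange t ht) t ht).le
    rw [← hHJB _ (hκrange t ht) t ht]
    linarith
  have hquot := div_le_div_of_hasDerivAt (a := 0) (b := θ) (P := fun t => ρ (κ t) t)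
    (fun t ht => hr t ht.1) (fun t ht => hasDerivAt_comp_graph (hρC1 _ _) (hκ' t ht.1))
    (fun t ht => hρ t ht.1)
    (fun t ht hrt => by
      simpa [mul_assoc, mul_left_comm] using mul_le_mul_of_nonneg_left (hsuper t ht.1) hrt.le)
    hr0 θ ⟨hθ, le_rfl⟩
  rw [div_le_div_iff₀ (hρ θ hθ) (hρ 0 le_rfl)] at hquot
  rw [le_div_iff₀ (hρ 0 le_rfl)]
  linarith

theorem stmt_6 (f g : ℝ → ℝ → ℝ) (νmin νmax : ℝ → ℝ)
    (hfcont : Continuous fun p : ℝ × ℝ => f p.1 p.2)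
    (hgcont : Continuous fun p : ℝ × ℝ => g p.1 p.2)
    (hgpos : ∀ κ ∈ Icc (0:ℝ) 1, ∀ θ : ℝ, 0 ≤ θ → 0 < g κ θ)
    (hνsign : ∀ κ ∈ Icc (0:ℝ) 1, νmin κ ≤ 0 ∧ 0 ≤ νmax κ)
    (ρ ρκ ρθ : ℝ → ℝ → ℝ)
    (hρC1 : ∀ κ θ : ℝ, HasFDerivAt (fun p : ℝ × ℝ => ρ p.1 p.2)
      (ρκ κ θ • ContinuousLinearMap.fst ℝ ℝ ℝ + ρθ κ θ • ContinuousLinearMap.snd ℝ ℝ ℝ)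
      (κ, θ))
    (hρκcont : Continuous fun p : ℝ × ℝ => ρκ p.1 p.2)
    (hρθcont : Continuous fun p : ℝ × ℝ => ρθ p.1 p.2)
    (hρpos : ∀ κ ∈ Icc (0:ℝ) 1, ∀ θ : ℝ, 0 ≤ θ → 0 < ρ κ θ)
    -- the HJB equation
    (hHJB : ∀ κ ∈ Icc (0:ℝ) 1, ∀ θ : ℝ, 0 ≤ θ →
      ρθ κ θ + g κ θ * min (νmin κ * ρκ κ θ) (νmax κ * ρκ κ θ) = f κ θ * ρ κ θ)
    -- an admissible solution
    (r κ ν : ℝ → ℝ) (hνmeas : Measurable ν)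
    (hνadm : ∀ θ : ℝ, 0 ≤ θ → νmin (κ θ) ≤ ν θ ∧ ν θ ≤ νmax (κ θ))
    (hκrange : ∀ θ : ℝ, 0 ≤ θ → κ θ ∈ Icc (0:ℝ) 1)
    (hr : ∀ θ : ℝ, 0 ≤ θ → HasDerivAt r (f (κ θ) θ * r θ) θ)
    (hκ' : ∀ θ : ℝ, 0 ≤ θ → HasDerivAt κ (g (κ θ) θ * ν θ) θ)
    (hr0 : 0 < r 0) :
    ∀ θ : ℝ, 0 ≤ θ → r θ ≤ ρ (κ θ) θ * r 0 / ρ (κ 0) 0 :=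
  stmt_6_general f g νmin νmax hgpos ρ ρκ ρθ hρC1 hρpos hHJB r κ ν hνadm hκrange hr hκ' hr0
end

section
/- For k > 0 and m_min = 1, m_max = 4, if k > √m_max − √m_min = 1, then for every constant m ∈ [1,4], the matrix M(m) = [[−k/m, −1/m],[1, 0]] is Hurwitz (all eigenvalues have negative real part), and moreover there exists a single positive definite symmetric 2×2 matrix P such that M(m)ᵀP + P M(m) is negative definite for all m ∈ [1,4]. -/
/-!
For each `m > 0` the matrix `M(m)` has trace `-k/m < 0` and determinant `1/m > 0`, so both roots
of its characteristic polynomial lie in the open left half-plane.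

A common Lyapunov matrix is `P = [[4k² + 1, k], [k, 2k²]]`: writing `M(m) = m⁻¹ N(m)` with
`N(m) = [[-k, -1], [m, 0]]`, one gets `-(M(m)ᵀ P + P M(m)) = m⁻¹ Q(m)` where
`Q(m) = [[2k(4k² + 1 - m), 5k² + 1 - 2k²m], [5k² + 1 - 2k²m, 2k]]`, and
`det Q(m) = 4k⁴(m - 1)(4 - m) + (k² - 1)(7k² + 1)` is positive on `[1, 4]` because `k > 1`.
-/

open Real Set Matrix

/-- The matrix `M(m) = [[−k/m, −1/m], [1, 0]]`. -/
noncomputable def Mmat (k m : ℝ) : Matrix (Fin 2) (Fin 2) ℝ :=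
  !![-(k / m), -(1 / m); 1, 0]

theorem Complex.re_lt_zero_of_sq_sub_mul_add_eq_zero {t d : ℝ} (ht : t < 0) (hd : 0 < d) {z : ℂ}
    (hz : z ^ 2 - t * z + d = 0) : z.re < 0 := by
  have hre : z.re ^ 2 - z.im ^ 2 - t * z.re + d = 0 := by
    simpa [sq] using congrArg Complex.re hz
  have him : z.im * (2 * z.re - t) = 0 := by
    have := congrArg Complex.im hz
    simp only [sq, sub_im, mul_im, ofReal_re, ofReal_im, add_im, zero_mul, add_zero,
      zero_im] at this
    linear_combination this
  rcases mul_eq_zero.mp him with him | him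
  · rw [him] at hre
    nlinarith
  · linarith

namespace Matrix

theorem re_lt_zero_of_hasEigenvalue_map_ofReal {A : Matrix (Fin 2) (Fin 2) ℝ}
    (htr : A.trace < 0) (hdet : 0 < A.det) {z : ℂ}
    (hz : Module.End.HasEigenvalue (toLin' (A.map Complex.ofReal)) z) : z.re < 0 := by
  have hroot : (A.map Complex.ofRealHom).charpoly.IsRoot z := by
    rw [← mem_spectrum_iff_isRoot_charpoly, ← spectrum_toLin']
    exact Module.End.hasEigenvalue_iff_mem_spectrum.mp hz
  rw [charpoly_map, Polynomial.IsRoot, Polynomial.eval_map, charpoly_fin_two] at hroot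
  simp only [Polynomial.eval₂_add, Polynomial.eval₂_sub, Polynomial.eval₂_X_pow,
    Polynomial.eval₂_mul, Polynomial.eval₂_C, Polynomial.eval₂_X, Complex.ofRealHom_eq_coe] at hroot
  exact Complex.re_lt_zero_of_sq_sub_mul_add_eq_zero htr hdet hroot

theorem posDef_fin_two {R : Type*} [Field R] [LinearOrder R] [IsStrictOrderedRing R] [StarRing R]
    [TrivialStar R] {a b d : R} (ha : 0 < a) (hdet : 0 < a * d - b ^ 2) :
    (!![a, b; b, d]).PosDef := by
  refine posDef_iff_dotProduct_mulVec.mpr ⟨?_, fun x hx => ?_⟩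
  · rw [isHermitian_iff_isSymm]
    ext i j
    fin_cases i <;> fin_cases j <;> rfl
  · simp only [star_trivial, dotProduct, mulVec, Fin.sum_univ_two, of_apply, cons_val',
      cons_val_zero, cons_val_one, empty_val', cons_val_fin_one]
    -- completing the square: `a (x ⬝ A x) = (a x₀ + b x₁)² + (a d - b²) x₁²`
    rcases eq_or_ne (x 1) 0 with h1 | h1
    · have h0 : x 0 ≠ 0 := fun h0 => hx (funext fun i => by fin_cases i <;> simp [h0, h1])
      simp only [h1]
      nlinarith [sq_pos_of_ne_zero h0]
    · nlinarith [sq_nonneg (a * x 0 + b * x 1), mul_pos hdet (sq_pos_of_ne_zero h1)]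

theorem neg_transpose_mul_add_mul_fin_two {R : Type*} [CommRing R] (a b c p r s : R) :
    -((!![-a, -b; c, 0])ᵀ * !![p, r; r, s] + !![p, r; r, s] * !![-a, -b; c, 0]) =
      !![2 * (a * p - c * r), a * r + b * p - c * s; a * r + b * p - c * s, 2 * (b * r)] := by
  ext i j
  fin_cases i <;> fin_cases j <;> simp [mul_apply] <;> ring

end Matrix

def lyapunovMatrix (k : ℝ) : Matrix (Fin 2) (Fin 2) ℝ :=
  !![4 * k ^ 2 + 1, k; k, 2 * k ^ 2]

theorem lyapunovMatrix_isSymm (k : ℝ) : (lyapunovMatrix k).IsSymm := by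
  ext i j
  fin_cases i <;> fin_cases j <;> rfl

theorem lyapunovMatrix_posDef {k : ℝ} (hk : 0 < k) : (lyapunovMatrix k).PosDef :=
  posDef_fin_two (by positivity) (by nlinarith [pow_pos hk 4])

theorem Mmat_trace (k m : ℝ) : (Mmat k m).trace = -(k / m) := by
  rw [Mmat, trace_fin_two_of, add_zero]

theorem Mmat_det (k m : ℝ) : (Mmat k m).det = 1 / m := by
  rw [Mmat, det_fin_two_of]
  ring

theorem Mmat_eq_inv_smul (k : ℝ) {m : ℝ} (hm : m ≠ 0) : Mmat k m = m⁻¹ • !![-k, -1; m, 0] := by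
  ext i j
  fin_cases i <;> fin_cases j <;> simp [Mmat, hm, div_eq_inv_mul]

theorem neg_lyapunov_Mmat_posDef {k m : ℝ} (hk : 1 < k) (hm : m ∈ Icc (1 : ℝ) 4) :
    (-((Mmat k m)ᵀ * lyapunovMatrix k + lyapunovMatrix k * Mmat k m)).PosDef := by
  obtain ⟨hm1, hm4⟩ := hm
  have hm0 : 0 < m := by linarith
  rw [Mmat_eq_inv_smul k hm0.ne', lyapunovMatrix]
  simp only [transpose_smul, Matrix.smul_mul, Matrix.mul_smul, ← smul_add, ← smul_neg,
    neg_transpose_mul_add_mul_fin_two]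
  refine (posDef_fin_two ?_ ?_).smul (inv_pos.mpr hm0)
  · nlinarith
  · have hdet : 2 * (k * (4 * k ^ 2 + 1) - m * k) * (2 * (1 * k)) -
        (k * k + 1 * (4 * k ^ 2 + 1) - m * (2 * k ^ 2)) ^ 2 =
        4 * k ^ 4 * ((m - 1) * (4 - m)) + (k ^ 2 - 1) * (7 * k ^ 2 + 1) := by ring
    rw [hdet]
    have hk2 : 0 < k ^ 2 - 1 := by nlinarith
    have hm14 : 0 ≤ (m - 1) * (4 - m) := mul_nonneg (by linarith) (by linarith)
    positivity

theorem stmt_11_general (k : ℝ)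
    (hcond : k > Real.sqrt 4 - Real.sqrt 1) :
    (∀ m ∈ Icc (1:ℝ) 4, ∀ z : ℂ,
      Module.End.HasEigenvalue
        (Matrix.toLin' ((Mmat k m).map (Complex.ofReal : ℝ → ℂ))) z → z.re < 0) ∧
    (∃ P : Matrix (Fin 2) (Fin 2) ℝ, P.IsSymm ∧ P.PosDef ∧
      ∀ m ∈ Icc (1:ℝ) 4, (-((Mmat k m)ᵀ * P + P * Mmat k m)).PosDef) := by
  have hk1 : 1 < k := by
    rwa [show (4 : ℝ) = 2 ^ 2 by norm_num, Real.sqrt_sq zero_le_two, Real.sqrt_one,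
      show (2 : ℝ) - 1 = 1 by norm_num] at hcond
  refine ⟨fun m hm z hz => ?_, lyapunovMatrix k, lyapunovMatrix_isSymm k,
    lyapunovMatrix_posDef (by linarith), fun m hm => neg_lyapunov_Mmat_posDef hk1 hm⟩
  have hm0 : 0 < m := by linarith [hm.1]
  refine re_lt_zero_of_hasEigenvalue_map_ofReal ?_ ?_ hz
  · rw [Mmat_trace, neg_lt_zero]
    positivity
  · rw [Mmat_det]
    positivity

theorem stmt_11 (k : ℝ) (hk : 0 < k)
    (hcond : k > Real.sqrt 4 - Real.sqrt 1) :
    (∀ m ∈ Icc (1:ℝ) 4, ∀ z : ℂ,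
      Module.End.HasEigenvalue
        (Matrix.toLin' ((Mmat k m).map (Complex.ofReal : ℝ → ℂ))) z → z.re < 0) ∧
    (∃ P : Matrix (Fin 2) (Fin 2) ℝ, P.IsSymm ∧ P.PosDef ∧
      ∀ m ∈ Icc (1:ℝ) 4, (-((Mmat k m)ᵀ * P + P * Mmat k m)).PosDef) :=
  stmt_11_general k hcond
end
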